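/- arXiv:2604.25055 — 3 statements merged into one kernel-verified Lean document; each statement's English description precedes it below -/
import Mathlib

section
/- Let G be a König–Egerváry graph and let H be a subgraph of G, each of whose connected components is either a single edge (a copy of K₂) or a cycle, such that the order |V(H)| is maximum among all subgraphs of G with this property. Then no connected component of H is an odd cycle. -/
/-! ## Basic matching terminology -/

/-- `M` is a matching of the simple graph `G`: a set of edges of `G` that are pairwise
non-adjacent, i.e. no two distinct edges of `M` share a vertex. -/
def IsMatching {V : Type} (G : SimpleGraph V) (M : Finset (Sym2 V)) : Prop :=
  (∀ e ∈ M, e ∈ G.edgeSet) ∧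
  ∀ e ∈ M, ∀ f ∈ M, e ≠ f → ∀ v : V, ¬(v ∈ e ∧ v ∈ f)

/-- A vertex `v` is saturated by the edge set `M` if it is an endpoint of some edge of `M`. -/
def Saturates {V : Type} (M : Finset (Sym2 V)) (v : V) : Prop := ∃ e ∈ M, v ∈ e

/-- `M` is a perfect matching of `G`: a matching saturating every vertex of `G`. -/
def IsPerfectMatching {V : Type} (G : SimpleGraph V) (M : Finset (Sym2 V)) : Prop :=
  IsMatching G M ∧ ∀ v : V, Saturates M v

/-- The matching number `μ(G)`: the maximum cardinality of a matching of `G`. -/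
noncomputable def matchNum {V : Type} (G : SimpleGraph V) : ℕ :=
  sSup {n | ∃ M : Finset (Sym2 V), IsMatching G M ∧ M.card = n}

/-- The independence number `α(G)`: the maximum cardinality of a set of pairwise
non-adjacent vertices. -/
noncomputable def indepNum {V : Type} (G : SimpleGraph V) : ℕ :=
  sSup {n | ∃ S : Finset V, (∀ u ∈ S, ∀ v ∈ S, ¬ G.Adj u v) ∧ S.card = n}

/-- `G` is a König–Egerváry graph if `α(G) + μ(G) = |V(G)|`. -/
def IsKonigEgervary {V : Type} [Fintype V] (G : SimpleGraph V) : Prop :=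
  indepNum G + matchNum G = Fintype.card V

/-! ## Degrees and graphs whose components are single edges or cycles -/

/-- The degree of `v` in `H`, as the cardinality of its neighbour set. -/
noncomputable def ndeg {V : Type} (H : SimpleGraph V) (v : V) : ℕ := (H.neighborSet v).ncard

/-- Every connected component of (the finite simple graph) `H` is a single edge (a copy of
`K₂`) or a cycle: every vertex has degree `1` or `2`, and the degree is constant on each
connected component (a finite connected `1`-regular graph is `K₂`, and a finite connected
`2`-regular graph is a cycle). -/
def ComponentsAreEdgesOrCycles {V : Type} (H : SimpleGraph V) : Prop :=
  (∀ v : V, ndeg H v = 1 ∨ ndeg H v = 2) ∧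
  ∀ ⦃u v : V⦄, H.Adj u v → ndeg H u = ndeg H v

/-- `H` is a Sachs subgraph of `G`: a spanning subgraph each of whose connected components
is a single edge or a cycle. -/
def IsSachsSubgraph {V : Type} (G H : SimpleGraph V) : Prop :=
  H ≤ G ∧ ComponentsAreEdgesOrCycles H

/-- `H` has a connected component which is an odd cycle: a component all of whose vertices
have degree `2` (hence a cycle) with an odd number of vertices. -/
def HasOddCycleComponent {V : Type} (H : SimpleGraph V) : Prop :=
  ∃ c : H.ConnectedComponent, (∀ v ∈ c.supp, ndeg H v = 2) ∧ Odd c.supp.ncard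

/-- Degree of a vertex in a subgraph. -/
noncomputable def subNdeg {V : Type} {G : SimpleGraph V} (H : G.Subgraph) (v : V) : ℕ :=
  (H.neighborSet v).ncard

/-- Every connected component of the subgraph `H` of `G` is a single edge or a cycle. -/
def SubComponentsAreEdgesOrCycles {V : Type} {G : SimpleGraph V} (H : G.Subgraph) : Prop :=
  (∀ v ∈ H.verts, subNdeg H v = 1 ∨ subNdeg H v = 2) ∧
  ∀ ⦃u v : V⦄, H.Adj u v → subNdeg H u = subNdeg H v

/-- The subgraph `H` of `G` has a connected component which is an odd cycle. -/
def SubHasOddCycleComponent {V : Type} {G : SimpleGraph V} (H : G.Subgraph) : Prop :=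
  ∃ c : H.coe.ConnectedComponent,
    (∀ v ∈ c.supp, subNdeg H ↑v = 2) ∧ Odd c.supp.ncard

/-- `prk G`: the maximum order of a subgraph of `G` each of whose connected components is a
single edge or a cycle (`0` for an edgeless graph). -/
noncomputable def prk {V : Type} (G : SimpleGraph V) : ℕ :=
  sSup {n | ∃ H : G.Subgraph, SubComponentsAreEdgesOrCycles H ∧ H.verts.ncard = n}

/-- `X` is a vertex cover of `H`: every edge of `H` has an endpoint in `X`. -/
def IsVertexCover {V : Type} (H : SimpleGraph V) (X : Set V) : Prop :=
  ∀ ⦃u v : V⦄, H.Adj u v → u ∈ X ∨ v ∈ X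

/-! ## Symmetric differences of matchings -/

/-- The graph on `V` whose edges are the symmetric difference `M₁ △ M₂`. -/
def symmDiffGraph {V : Type} [DecidableEq V] (M₁ M₂ : Finset (Sym2 V)) : SimpleGraph V :=
  SimpleGraph.fromEdgeSet ↑(symmDiff M₁ M₂)

/-- On the vertex set `S`, consecutive edges of `H` alternate between `M₁` and `M₂`. -/
def AltOn {V : Type} (H : SimpleGraph V) (M₁ M₂ : Finset (Sym2 V)) (S : Set V) : Prop :=
  ∀ ⦃u v w : V⦄, v ∈ S → H.Adj u v → H.Adj v w → u ≠ w →
    (s(u, v) ∈ M₁ ∧ s(v, w) ∈ M₂) ∨ (s(u, v) ∈ M₂ ∧ s(v, w) ∈ M₁)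

/-! ## Perfect flowers -/

/-- `(C, P)` is an `M`-perfect flower: `C` is an odd cycle of length `2k+1` containing
exactly `k` edges of `M`, and `P` is a nontrivial `M`-alternating path whose first and last
edges belong to `M`, such that `V(C) ∩ V(P)` consists exactly of the common endpoint `a`. -/
structure IsPerfectFlower {V : Type} [DecidableEq V] (G : SimpleGraph V)
    (M : Finset (Sym2 V)) {a b : V} (C : G.Walk a a) (P : G.Walk a b) : Prop where
  cycle : C.IsCycle
  odd : Odd C.length
  blossom : C.edges.countP (fun e => e ∈ M) = C.length / 2
  path : P.IsPath
  nontrivial : 0 < P.length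
  alternating : List.Chain' (fun e f => e ∈ M ↔ f ∉ M) P.edges
  firstEdge : ∀ e ∈ P.edges.head?, e ∈ M
  lastEdge : ∀ e ∈ P.edges.getLast?, e ∈ M
  meet : ∀ v : V, (v ∈ C.support ∧ v ∈ P.support) ↔ v = a

/-- The perfect-flower part `PF(G)`: vertices belonging to some `M`-perfect flower, for some
maximum matching `M` of `G`. -/
def PF {V : Type} [DecidableEq V] (G : SimpleGraph V) : Set V :=
  {x | ∃ M : Finset (Sym2 V), IsMatching G M ∧ M.card = matchNum G ∧
    ∃ (a b : V) (C : G.Walk a a) (P : G.Walk a b),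
      IsPerfectFlower G M C P ∧ (x ∈ C.support ∨ x ∈ P.support)}

/-- The perfect-flower-free part `PFF(G) = V(G) \ PF(G)`. -/
def PFF {V : Type} [DecidableEq V] (G : SimpleGraph V) : Set V := (PF G)ᶜ

/-! ## Determinant and permanent of a graph -/

/-- The determinant of the adjacency matrix of `G` over `ℤ`. -/
noncomputable def detG {V : Type} [Fintype V] [DecidableEq V] (G : SimpleGraph V) : ℤ :=
  letI := Classical.decRel G.Adj
  (SimpleGraph.adjMatrix ℤ G).det

/-- The permanent of the adjacency matrix of `G` over `ℤ`. -/
noncomputable def permG {V : Type} [Fintype V] [DecidableEq V] (G : SimpleGraph V) : ℤ :=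
  letI := Classical.decRel G.Adj
  (SimpleGraph.adjMatrix ℤ G).permanent

/-- `det(G[X])`, the determinant of the adjacency matrix of the induced subgraph `G[X]`
(equal to `1` when `X = ∅`, the determinant of the empty matrix). -/
noncomputable def detInd {V : Type} [Fintype V] [DecidableEq V]
    (G : SimpleGraph V) (X : Set V) : ℤ :=
  letI : Fintype ↥X := X.toFinite.fintype
  detG (G.induce X)

/-- `perm(G[X])`, the permanent of the adjacency matrix of the induced subgraph `G[X]`
(equal to `1` when `X = ∅`). -/
noncomputable def permInd {V : Type} [Fintype V] [DecidableEq V]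
    (G : SimpleGraph V) (X : Set V) : ℤ :=
  letI : Fintype ↥X := X.toFinite.fintype
  permG (G.induce X)

/-! ## Auxiliary constructions -/

/-- The subgraph of `G` spanned by the edges of a matching `M`: its vertices are the
endpoints of edges of `M` and its edges are exactly the edges of `M`. -/
def matchingSubgraph {V : Type} (G : SimpleGraph V) (M : Finset (Sym2 V))
    (hM : ∀ e ∈ M, e ∈ G.edgeSet) : G.Subgraph where
  verts := {v | ∃ e ∈ M, v ∈ e}
  Adj u v := s(u, v) ∈ M
  adj_sub h := G.mem_edgeSet.mp (hM _ h)
  edge_vert h := ⟨_, h, Sym2.mem_mk_left _ _⟩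
  symm := ⟨fun u v h => by show s(v, u) ∈ M; rw [Sym2.eq_swap]; exact h⟩

/-- The restriction of an edge set `M` to the edges with both endpoints in `X`. -/
noncomputable def restrictEdges {V : Type} (M : Finset (Sym2 V)) (X : Set V) :
    Finset (Sym2 V) :=
  letI := Classical.decPred fun e : Sym2 V => ∀ v ∈ e, v ∈ X
  M.filter fun e => ∀ v ∈ e, v ∈ X

/-- `M` is a perfect matching of the induced subgraph `G[X]`: a matching of `G` whose edges
have both endpoints in `X`, saturating every vertex of `X`. -/
def IsPerfectMatchingOn {V : Type} (G : SimpleGraph V) (X : Set V)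
    (M : Finset (Sym2 V)) : Prop :=
  (∀ e ∈ M, e ∈ G.edgeSet ∧ ∀ v ∈ e, v ∈ X) ∧
  (∀ e ∈ M, ∀ f ∈ M, e ≠ f → ∀ v : V, ¬(v ∈ e ∧ v ∈ f)) ∧
  ∀ v ∈ X, ∃ e ∈ M, v ∈ e

/-!
Take a maximum independent set `S` and a maximum matching of the König–Egerváry graph `G`;
then `|V \ S| = μ(G)`, and the matching itself is a subgraph of the admissible kind, so
`|V(H)| ≥ 2μ(G)`. On the other hand, in a graph whose components are regular of positive
degree, an independent set can occupy at most half of each component, and strictly less than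
half of a component of odd order. So an odd cycle in `H` would give
`|V(H)| < 2 |V(H) \ S| ≤ 2 |V \ S| = 2μ(G)`.
-/

open Finset in
theorem SimpleGraph.card_le_card_of_forall_adj_mem {V : Type*} [Fintype V] (K : SimpleGraph V)
    [DecidableRel K.Adj] {I B : Finset V} (hpos : ∀ v ∈ I, K.degree v ≠ 0)
    (hdeg : ∀ ⦃v w⦄, K.Adj v w → K.degree v = K.degree w)
    (hB : ∀ v ∈ I, ∀ w, K.Adj v w → w ∈ B) : #I ≤ #B := by
  classical
  -- Every `v ∈ I` sends total weight `1` to `B`, spread evenly over its neighbours; every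
  -- `w ∈ B` receives at most `1`, because the weight on an edge is also `1 / deg w`.
  set f : V → V → ℚ := fun v w => if K.Adj v w then (K.degree w : ℚ)⁻¹ else 0
  have hsend : ∀ v ∈ I, ∑ w ∈ B, f v w = 1 := by
    intro v hv
    have hN : B.filter (K.Adj v) = K.neighborFinset v := by
      ext w
      simpa [mem_neighborFinset] using fun h => hB v hv w h
    rw [sum_ite, sum_const_zero, add_zero, hN,
      sum_congr rfl fun w hw => by rw [← hdeg ((K.mem_neighborFinset v w).mp hw)],
      sum_const, card_neighborFinset_eq_degree, nsmul_eq_mul,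
      mul_inv_cancel₀ (Nat.cast_ne_zero.mpr (hpos v hv))]
  have hreceive : ∀ w, ∑ v ∈ I, f v w ≤ 1 := by
    intro w
    rw [sum_ite, sum_const_zero, add_zero, sum_const, nsmul_eq_mul,
      ← div_eq_mul_inv]
    refine div_le_one_of_le₀ ?_ (Nat.cast_nonneg _)
    rw [← card_neighborFinset_eq_degree]
    exact_mod_cast card_le_card fun v hv =>
      (K.mem_neighborFinset w v).mpr (K.adj_symm (mem_filter.mp hv).2)
  have hQ : (#I : ℚ) ≤ #B :=
    calc (#I : ℚ) = ∑ v ∈ I, ∑ w ∈ B, f v w := by simp [sum_congr rfl hsend]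
      _ = ∑ w ∈ B, ∑ v ∈ I, f v w := sum_comm
      _ ≤ ∑ w ∈ B, 1 := sum_le_sum fun w _ => hreceive w
      _ = #B := by simp
  exact_mod_cast hQ

theorem SimpleGraph.ncard_le_ncard_of_forall_adj_mem {V : Type*} [Fintype V] (K : SimpleGraph V)
    [DecidableRel K.Adj] {I B : Set V} (hpos : ∀ v ∈ I, K.degree v ≠ 0)
    (hdeg : ∀ ⦃v w⦄, K.Adj v w → K.degree v = K.degree w)
    (hB : ∀ v ∈ I, ∀ w, K.Adj v w → w ∈ B) : I.ncard ≤ B.ncard := by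
  classical
  simp only [Set.ncard_eq_toFinset_card']
  exact K.card_le_card_of_forall_adj_mem (by simpa using hpos) hdeg (by simpa using hB)

theorem subNdeg_eq_degree_spanningCoe {V : Type} [Fintype V] {G : SimpleGraph V}
    (H : G.Subgraph) [DecidableRel H.spanningCoe.Adj] (v : V) :
    subNdeg H v = H.spanningCoe.degree v := by
  rw [← SimpleGraph.card_neighborSet_eq_degree, ← Nat.card_eq_fintype_card,
    Nat.card_coe_set_eq]
  rfl

theorem SimpleGraph.Subgraph.mem_image_val_supp_of_adj {V : Type} {G : SimpleGraph V}
    {H : G.Subgraph} (c : H.coe.ConnectedComponent) {v w : V}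
    (hv : v ∈ Subtype.val '' c.supp) (hvw : H.Adj v w) : w ∈ Subtype.val '' c.supp := by
  obtain ⟨v, hvc, rfl⟩ := hv
  refine ⟨⟨w, H.edge_vert hvw.symm⟩, ?_, rfl⟩
  rw [SimpleGraph.ConnectedComponent.mem_supp_iff] at hvc ⊢
  rw [← hvc]
  exact SimpleGraph.ConnectedComponent.sound (SimpleGraph.Adj.reachable hvw).symm

namespace SubComponentsAreEdgesOrCycles

variable {V : Type} [Fintype V] {G : SimpleGraph V} {H : G.Subgraph}

theorem ncard_inter_le_ncard_sdiff_inter (hH : SubComponentsAreEdgesOrCycles H) {S U : Set V}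
    (hS : ∀ u ∈ S, ∀ v ∈ S, ¬ G.Adj u v) (hU : ∀ ⦃v w⦄, v ∈ U → H.Adj v w → w ∈ U) :
    (H.verts ∩ S ∩ U).ncard ≤ ((H.verts \ S) ∩ U).ncard := by
  classical
  refine H.spanningCoe.ncard_le_ncard_of_forall_adj_mem ?_ ?_ ?_
  · rintro v ⟨⟨hvH, -⟩, -⟩
    rw [← subNdeg_eq_degree_spanningCoe]
    rcases hH.1 v hvH with h | h <;> omega
  · intro v w hvw
    simpa only [← subNdeg_eq_degree_spanningCoe] using hH.2 hvw
  · rintro v ⟨⟨-, hvS⟩, hvU⟩ w hvw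
    exact ⟨⟨H.edge_vert hvw.symm, fun hwS => hS v hvS w hwS (H.adj_sub hvw)⟩, hU hvU hvw⟩

theorem ncard_verts_lt_two_mul_ncard_sdiff (hH : SubComponentsAreEdgesOrCycles H)
    (c : H.coe.ConnectedComponent) (hc : Odd c.supp.ncard) {S : Set V}
    (hS : ∀ u ∈ S, ∀ v ∈ S, ¬ G.Adj u v) : H.verts.ncard < 2 * (H.verts \ S).ncard := by
  set T := Subtype.val '' c.supp
  have hT : ∀ ⦃v w⦄, v ∈ T → H.Adj v w → w ∈ T := fun v w hv hvw =>
    SimpleGraph.Subgraph.mem_image_val_supp_of_adj c hv hvw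
  have hTc : ∀ ⦃v w⦄, v ∈ Tᶜ → H.Adj v w → w ∈ Tᶜ := fun v w hv hvw hw =>
    hv (hT hw hvw.symm)
  have hTH : T ⊆ H.verts := by rintro _ ⟨v, -, rfl⟩; exact v.2
  have hTodd : Odd T.ncard := by rwa [Set.ncard_image_of_injective _ Subtype.val_injective]
  have hin := hH.ncard_inter_le_ncard_sdiff_inter hS hT
  have hout := hH.ncard_inter_le_ncard_sdiff_inter hS hTc
  have hsplitT : (H.verts ∩ S ∩ T).ncard + ((H.verts \ S) ∩ T).ncard = T.ncard := by
    rw [← Set.ncard_inter_add_ncard_sdiff_eq_ncard T S]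
    congr 2 <;> ext v <;> have hvH := @hTH v <;>
      simp only [Set.mem_inter_iff, Set.mem_sdiff] <;> tauto
  have hA := Set.ncard_inter_add_ncard_sdiff_eq_ncard (H.verts ∩ S) T
  have hB := Set.ncard_inter_add_ncard_sdiff_eq_ncard (H.verts \ S) T
  have hAB := Set.ncard_inter_add_ncard_sdiff_eq_ncard H.verts S
  rw [← Set.sdiff_eq, ← Set.sdiff_eq] at hout
  obtain ⟨k, hk⟩ := hTodd
  omega

end SubComponentsAreEdgesOrCycles

section Extremal

variable {V : Type} [Fintype V] (G : SimpleGraph V)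

theorem exists_isMatching_card_eq_matchNum :
    ∃ M : Finset (Sym2 V), IsMatching G M ∧ M.card = matchNum G := by
  classical
  exact Nat.sSup_mem (s := {n | ∃ M : Finset (Sym2 V), IsMatching G M ∧ M.card = n})
    ⟨0, ∅, by simp [IsMatching]⟩
    ⟨Fintype.card (Sym2 V), by rintro _ ⟨M, -, rfl⟩; exact M.card_le_univ⟩

theorem exists_indep_card_eq_indepNum :
    ∃ S : Finset V, (∀ u ∈ S, ∀ v ∈ S, ¬ G.Adj u v) ∧ S.card = indepNum G :=
  Nat.sSup_mem (s := {n | ∃ S : Finset V, (∀ u ∈ S, ∀ v ∈ S, ¬ G.Adj u v) ∧ S.card = n})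
    ⟨0, ∅, by simp⟩
    ⟨Fintype.card V, by rintro _ ⟨S, -, rfl⟩; exact S.card_le_univ⟩

theorem IsKonigEgervary.exists_indep_ncard_compl_eq_matchNum (hG : IsKonigEgervary G) :
    ∃ S : Set V, (∀ u ∈ S, ∀ v ∈ S, ¬ G.Adj u v) ∧ Sᶜ.ncard = matchNum G := by
  obtain ⟨S, hS, hcard⟩ := exists_indep_card_eq_indepNum G
  refine ⟨S, hS, ?_⟩
  rw [Set.ncard_compl, Set.ncard_coe_finset, hcard, Nat.card_eq_fintype_card, ← hG]
  omega

end Extremal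

section MatchingSubgraph

variable {V : Type} {G : SimpleGraph V} {M : Finset (Sym2 V)}

theorem subNdeg_matchingSubgraph (hM : IsMatching G M) {v : V}
    (hv : v ∈ (matchingSubgraph G M hM.1).verts) : subNdeg (matchingSubgraph G M hM.1) v = 1 := by
  obtain ⟨e, he, hve⟩ := hv
  obtain ⟨w, rfl⟩ := Sym2.mem_iff_exists.mp hve
  suffices (matchingSubgraph G M hM.1).neighborSet v = {w} by
    rw [subNdeg, this, Set.ncard_singleton]
  ext u
  refine ⟨fun hu => ?_, fun hu => hu ▸ he⟩
  by_contra huw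
  exact hM.2 _ hu _ he (fun h => huw (Sym2.congr_right.mp h)) v
    ⟨Sym2.mem_mk_left _ _, Sym2.mem_mk_left _ _⟩

theorem subComponentsAreEdgesOrCycles_matchingSubgraph (hM : IsMatching G M) :
    SubComponentsAreEdgesOrCycles (matchingSubgraph G M hM.1) :=
  ⟨fun _ hv => .inl (subNdeg_matchingSubgraph hM hv), fun _ _ huv => by
    rw [subNdeg_matchingSubgraph hM (SimpleGraph.Subgraph.edge_vert _ huv),
      subNdeg_matchingSubgraph hM (SimpleGraph.Subgraph.edge_vert _ huv.symm)]⟩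

theorem ncard_verts_matchingSubgraph (hM : IsMatching G M) :
    (matchingSubgraph G M hM.1).verts.ncard = 2 * M.card := by
  classical
  have hverts : (matchingSubgraph G M hM.1).verts = ↑(M.biUnion Sym2.toFinset) := by
    ext v
    simp [matchingSubgraph, Sym2.mem_toFinset]
  rw [hverts, Set.ncard_coe_finset, Finset.card_biUnion, Finset.sum_const_nat, mul_comm]
  · exact fun e he => Sym2.card_toFinset_of_not_isDiag e (G.not_isDiag_of_mem_edgeSet (hM.1 e he))
  · exact fun e he f hf hef => Finset.disjoint_left.mpr fun v hve hvf =>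
      hM.2 e he f hf hef v ⟨Sym2.mem_toFinset.mp hve, Sym2.mem_toFinset.mp hvf⟩

end MatchingSubgraph

/-- Let `G` be a König–Egerváry graph and `H` a subgraph of `G` each of
whose components is a single edge or a cycle, of maximum order among all such subgraphs.
Then no component of `H` is an odd cycle. -/
theorem stmt3 {V : Type} [Fintype V] (G : SimpleGraph V) (hG : IsKonigEgervary G)
    (H : G.Subgraph) (hH : SubComponentsAreEdgesOrCycles H)
    (hmax : ∀ H' : G.Subgraph, SubComponentsAreEdgesOrCycles H' →
      H'.verts.ncard ≤ H.verts.ncard) :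
    ¬ SubHasOddCycleComponent H := by
  rintro ⟨c, -, hc⟩
  obtain ⟨M, hM, hMcard⟩ := exists_isMatching_card_eq_matchNum G
  obtain ⟨S, hS, hScard⟩ := hG.exists_indep_ncard_compl_eq_matchNum
  have hmatch : 2 * matchNum G ≤ H.verts.ncard := by
    rw [← hMcard, ← ncard_verts_matchingSubgraph hM]
    exact hmax _ (subComponentsAreEdgesOrCycles_matchingSubgraph hM)
  have hcover : (H.verts \ S).ncard ≤ matchNum G :=
    hScard ▸ Set.ncard_le_ncard (Set.sdiff_subset_compl _ _)
  have hodd := hH.ncard_verts_lt_two_mul_ncard_sdiff c hc hS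
  omega
end

section
/- Let G be a König–Egerváry graph and suppose G has a Sachs subgraph (i.e., a spanning subgraph each of whose connected components is a single edge or a cycle). Then no Sachs subgraph of G has a connected component which is an odd cycle. -/
/-!
Every component of a Sachs subgraph `H` of `G` is regular of positive degree, so double
counting the edges of `H` leaving an independent set `S` shows that `S` takes at most half
of each component, and strictly less than half of a component of odd order. Hence
`2 α(G) < |V|`, while `2 μ(G) ≤ |V|` holds in every graph, so `α(G) + μ(G) < |V|`.
-/

open Finset

namespace SimpleGraph

variable {V : Type} {H : SimpleGraph V}

theorem ndeg_eq_of_reachable (hconst : ∀ ⦃u v : V⦄, H.Adj u v → ndeg H u = ndeg H v)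
    {u v : V} (h : H.Reachable u v) : ndeg H u = ndeg H v := by
  obtain ⟨p⟩ := h
  induction p with
  | nil => rfl
  | cons hadj _ ih => exact (hconst hadj).trans ih

theorem two_mul_card_inter_le_of_isIndepSet [Finite V] [DecidableEq V] {S A : Finset V}
    {d : ℕ} (hd : 0 < d) (hS : H.IsIndepSet (S : Set V))
    (hA : ∀ v ∈ A, ∀ u, H.Adj v u → u ∈ A) (hreg : ∀ v ∈ A, ndeg H v = d) :
    2 * #(A ∩ S) ≤ #A := by
  classical
  have hcount : #(A ∩ S) * d ≤ #(A \ S) * d := by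
    refine card_mul_le_card_mul H.Adj (fun a ha => ?_) (fun b hb => ?_)
    · obtain ⟨haA, haS⟩ := mem_inter.mp ha
      have hN : H.neighborSet a = ↑((A \ S).bipartiteAbove H.Adj a) := by
        ext u
        simp only [mem_neighborSet, bipartiteAbove, coe_filter, mem_sdiff, Set.mem_ofPred_eq]
        exact ⟨fun h => ⟨⟨hA a haA u h, fun huS => hS haS huS (H.ne_of_adj h) h⟩, h⟩,
          fun h => h.2⟩
      rw [← hreg a haA, ndeg, hN, Set.ncard_coe_finset]
    · rw [← hreg b (mem_sdiff.mp hb).1, ndeg, ← Set.ncard_coe_finset]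
      refine Set.ncard_le_ncard (fun u hu => ?_)
      simp only [bipartiteBelow, coe_filter, Set.mem_ofPred_eq] at hu
      exact hu.2.symm
  have := Nat.le_of_mul_le_mul_right hcount hd
  have := card_inter_add_card_sdiff A S
  omega

theorem two_mul_card_inter_supp_le [Fintype V] [DecidableEq V] [DecidableRel H.Adj]
    (hH : ComponentsAreEdgesOrCycles H) {S : Finset V} (hS : H.IsIndepSet (S : Set V))
    (c : H.ConnectedComponent) : 2 * #(c.supp.toFinset ∩ S) ≤ #c.supp.toFinset := by
  obtain ⟨hdeg, hconst⟩ := hH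
  refine ConnectedComponent.ind (fun v => ?_) c
  refine two_mul_card_inter_le_of_isIndepSet (d := ndeg H v) ?_ hS (fun u hu w huw => ?_)
    (fun u hu => ?_)
  · rcases hdeg v with h | h <;> omega
  · rw [Set.mem_toFinset, ConnectedComponent.mem_supp_iff] at hu ⊢
    exact (ConnectedComponent.sound huw.reachable).symm.trans hu
  · rw [Set.mem_toFinset, ConnectedComponent.mem_supp_iff] at hu
    exact ndeg_eq_of_reachable hconst (ConnectedComponent.exact hu)

theorem two_mul_card_lt_of_hasOddCycleComponent [Fintype V]
    (hH : ComponentsAreEdgesOrCycles H) (hodd : HasOddCycleComponent H) {S : Finset V}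
    (hS : H.IsIndepSet (S : Set V)) : 2 * #S < Fintype.card V := by
  classical
  obtain ⟨c₀, -, hc₀⟩ := hodd
  have hsum (T : Finset V) : #T = ∑ c : H.ConnectedComponent, #(c.supp.toFinset ∩ T) := by
    rw [card_eq_sum_card_fiberwise (f := H.connectedComponentMk) (t := univ)
      (fun _ _ => mem_coe.mpr (mem_univ _))]
    refine sum_congr rfl fun c _ => congrArg card ?_
    ext v
    simp [and_comm]
  have hlt : 2 * #(c₀.supp.toFinset ∩ S) < #c₀.supp.toFinset := by
    have := two_mul_card_inter_supp_le hH hS c₀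
    obtain ⟨k, hk⟩ := Set.ncard_eq_toFinset_card' c₀.supp ▸ hc₀
    omega
  calc 2 * #S = ∑ c, 2 * #(c.supp.toFinset ∩ S) := by rw [hsum S, mul_sum]
    _ < ∑ c, #(c.supp.toFinset ∩ univ) :=
      sum_lt_sum (fun c _ => by simpa using two_mul_card_inter_supp_le hH hS c)
        ⟨c₀, mem_univ _, by simpa using hlt⟩
    _ = Fintype.card V := by rw [← hsum univ, card_univ]

end SimpleGraph

theorem IsMatching.two_mul_card_le {V : Type} [Fintype V] {G : SimpleGraph V}
    {M : Finset (Sym2 V)} (hM : IsMatching G M) : 2 * #M ≤ Fintype.card V := by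
  classical
  have hcount : #M * 2 ≤ #(univ : Finset V) * 1 := by
    refine card_mul_le_card_mul (fun e v => v ∈ e) (fun e he => ?_) (fun v _ => ?_)
    · have hends : univ.bipartiteAbove (fun e v => v ∈ e) e = e.toFinset := by
        ext v
        simp [bipartiteAbove]
      rw [hends, Sym2.card_toFinset_of_not_isDiag e (G.not_isDiag_of_mem_edgeSet (hM.1 e he))]
    · refine card_le_one.mpr fun e he f hf => by_contra fun hef => ?_
      simp only [bipartiteBelow, mem_filter] at he hf
      exact hM.2 e he.1 f hf.1 hef v ⟨he.2, hf.2⟩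
  rw [card_univ] at hcount
  omega

theorem indepNum_le {V : Type} {G : SimpleGraph V} {k : ℕ}
    (h : ∀ S : Finset V, G.IsIndepSet (S : Set V) → #S ≤ k) : indepNum G ≤ k :=
  csSup_le' fun _ ⟨S, hS, hcard⟩ => hcard ▸ h S fun u hu v hv _ => hS u hu v hv

theorem matchNum_le {V : Type} {G : SimpleGraph V} {k : ℕ}
    (h : ∀ M : Finset (Sym2 V), IsMatching G M → #M ≤ k) : matchNum G ≤ k :=
  csSup_le' fun _ ⟨M, hM, hcard⟩ => hcard ▸ h M hM

theorem stmt4_general {V : Type} [Fintype V] (G : SimpleGraph V) (hG : IsKonigEgervary G) :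
    ∀ H : SimpleGraph V, IsSachsSubgraph G H → ¬ HasOddCycleComponent H := by
  rintro H ⟨hle, hH⟩ hodd
  have hsmall (S : Finset V) (hS : G.IsIndepSet (S : Set V)) : 2 * #S < Fintype.card V :=
    SimpleGraph.two_mul_card_lt_of_hasOddCycleComponent hH hodd
      (hS.mono' fun _ _ h hadj => h (hle hadj))
  have hpos : 0 < Fintype.card V := by simpa using hsmall ∅ (by simp)
  have hα : indepNum G ≤ (Fintype.card V - 1) / 2 := indepNum_le fun S hS => by
    have := hsmall S hS
    omega
  have hμ : matchNum G ≤ Fintype.card V / 2 := matchNum_le fun M hM => by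
    have := hM.two_mul_card_le
    omega
  unfold IsKonigEgervary at hG
  omega

/-- Let `G` be a König–Egerváry graph that has a Sachs subgraph.  Then no
Sachs subgraph of `G` has a connected component which is an odd cycle. -/
theorem stmt4 {V : Type} [Fintype V] (G : SimpleGraph V) (hG : IsKonigEgervary G)
    (hex : ∃ H : SimpleGraph V, IsSachsSubgraph G H) :
    ∀ H : SimpleGraph V, IsSachsSubgraph G H → ¬ HasOddCycleComponent H :=
  stmt4_general G hG
end

section
/- Let G be a finite simple graph, let M be a perfect matching of G, and let (C, P) be an M-perfect flower in G. Then no edge of M has exactly one endpoint in V(C) ∪ V(P); equivalently, every vertex of V(C) ∪ V(P) is matched by M to another vertex of V(C) ∪ V(P). -/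
/-! Every vertex of the alternating path `P` is covered by an `M`-edge of `P`, since its first
and last edges lie in `M` and no two consecutive edges avoid `M`. In particular `a` is matched
along `P`, so no `M`-edge of `C` contains `a`. The `k` edges of `M` on `C` are pairwise disjoint,
so they cover `2k` vertices of `C - a`, which has exactly `2k` vertices: every vertex of `C` other
than `a` is matched along `C`. Hence every vertex of the flower has its partner in the flower, and
uniqueness of partners gives the first claim. -/

namespace IsMatching

variable {V : Type} {G : SimpleGraph V} {M : Finset (Sym2 V)}

theorem eq_of_mem_of_mem (hM : IsMatching G M) {e f : Sym2 V} (he : e ∈ M) (hf : f ∈ M)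
    {x : V} (hxe : x ∈ e) (hxf : x ∈ f) : e = f := by
  by_contra hef
  exact hM.2 e he f hf hef x ⟨hxe, hxf⟩

theorem eq_of_mk_mem_of_mk_mem (hM : IsMatching G M) {x y z : V} (hy : s(x, y) ∈ M)
    (hz : s(x, z) ∈ M) : y = z :=
  Sym2.congr_right.mp (hM.eq_of_mem_of_mem hy hz (Sym2.mem_mk_left x y) (Sym2.mem_mk_left x z))

theorem card_biUnion_toFinset [DecidableEq V] (hM : IsMatching G M) {F : Finset (Sym2 V)}
    (hF : F ⊆ M) : (F.biUnion Sym2.toFinset).card = 2 * F.card := by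
  have hdisj : (F : Set (Sym2 V)).PairwiseDisjoint Sym2.toFinset := by
    intro e he f hf hef
    refine Finset.disjoint_left.mpr fun x hxe hxf => hef ?_
    exact hM.eq_of_mem_of_mem (hF he) (hF hf) (Sym2.mem_toFinset.mp hxe) (Sym2.mem_toFinset.mp hxf)
  rw [Finset.card_biUnion hdisj, Finset.sum_const_nat fun e he =>
    Sym2.card_toFinset_of_not_isDiag e (G.not_isDiag_of_mem_edgeSet (hM.1 e (hF he))), mul_comm]

end IsMatching

namespace SimpleGraph.Walk

variable {V : Type} {G : SimpleGraph V} {M : Finset (Sym2 V)}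

theorem exists_mem_support_ne_of_mem_edges {u v x : V} {Q : G.Walk u v} {e : Sym2 V}
    (he : e ∈ Q.edges) (hx : x ∈ e) : ∃ y ∈ Q.support, y ≠ x ∧ s(x, y) = e := by
  induction e using Sym2.ind with
  | _ p q =>
    have hpq : p ≠ q := G.ne_of_adj (Q.adj_of_mem_edges he)
    rcases Sym2.mem_iff.mp hx with rfl | rfl
    · exact ⟨q, Q.snd_mem_support_of_mem_edges he, hpq.symm, rfl⟩
    · exact ⟨p, Q.fst_mem_support_of_mem_edges he, hpq, Sym2.eq_swap⟩

theorem exists_mem_edges_of_alternating : ∀ {u v : V} (Q : G.Walk u v), 0 < Q.length →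
    Q.edges.IsChain (fun e f => e ∈ M ↔ f ∉ M) → (∀ e ∈ Q.edges.head?, e ∈ M) →
    (∀ e ∈ Q.edges.getLast?, e ∈ M) → ∀ x ∈ Q.support, ∃ e ∈ Q.edges, e ∈ M ∧ x ∈ e
  | _, _, nil, hpos, _, _, _, _, _ => absurd hpos (lt_irrefl 0)
  | u, v, cons _ nil, _, _, hhead, _, x, hx => by
    refine ⟨s(u, v), by simp, hhead _ rfl, ?_⟩
    simp only [support_cons, support_nil, List.mem_cons, List.not_mem_nil, or_false] at hx
    rcases hx with rfl | rfl <;> simp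
  | _, _, cons _ (cons _ nil), _, hchain, hhead, hlast, _, _ => by
    simp only [edges_cons, edges_nil, List.isChain_pair] at hchain hhead hlast
    exact absurd (hlast _ rfl) (hchain.mp (hhead _ rfl))
  | u, _, cons (v := w) _ (cons (v := y) hwy (cons (v := z) hadj q)), _, hchain, hhead, hlast,
      x, hx => by
    have huw : s(u, w) ∈ M := hhead _ rfl
    simp only [edges_cons, List.isChain_cons_cons] at hchain
    have hyz : s(y, z) ∈ M := by_contra fun h => hchain.1.mp huw (hchain.2.1.mpr h)
    simp only [support_cons, List.mem_cons] at hx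
    rcases hx with rfl | rfl | hx
    · exact ⟨s(x, w), by simp, huw, by simp⟩
    · exact ⟨s(u, x), by simp, huw, by simp⟩
    · obtain ⟨e, he, heM, hxe⟩ := exists_mem_edges_of_alternating (cons hadj q) (by simp)
        hchain.2.2 (by simpa using hyz) (by simpa [edges_cons, List.getLast?_cons_cons] using hlast)
        x (by simpa using hx)
      exact ⟨e, List.mem_cons_of_mem _ (List.mem_cons_of_mem _ he), heM, hxe⟩

theorem IsCycle.card_toFinset_support_tail [DecidableEq V] {a : V} {C : G.Walk a a}
    (hC : C.IsCycle) : C.support.tail.toFinset.card = C.length := by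
  rw [List.toFinset_card_of_nodup hC.support_nodup, List.length_tail, length_support,
    Nat.add_sub_cancel]

theorem IsCycle.exists_mem_edges_of_countP_eq [DecidableEq V] (hM : IsMatching G M) {a : V}
    {C : G.Walk a a} (hC : C.IsCycle) (hodd : Odd C.length)
    (hcount : C.edges.countP (fun e => e ∈ M) = C.length / 2)
    (ha : ∀ e ∈ C.edges, e ∈ M → a ∉ e) {x : V} (hx : x ∈ C.support) (hxa : x ≠ a) :
    ∃ e ∈ C.edges, e ∈ M ∧ x ∈ e := by
  by_contra! hxM
  set F := (C.edges.filter fun e => e ∈ M).toFinset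
  have hFM : F ⊆ M := fun e he =>
    of_decide_eq_true (List.mem_filter.mp (List.mem_toFinset.mp he)).2
  have hcardF : F.card = C.length / 2 := by
    rw [List.toFinset_card_of_nodup (hC.edges_nodup.filter _), ← List.countP_eq_length_filter,
      hcount]
  have hsub : F.biUnion Sym2.toFinset ⊆ (C.support.tail.toFinset.erase a).erase x := by
    intro y hy
    obtain ⟨e, he, hye⟩ := Finset.mem_biUnion.mp hy
    obtain ⟨heC, heM⟩ := List.mem_filter.mp (List.mem_toFinset.mp he)
    rw [Sym2.mem_toFinset] at hye
    have hyx : y ≠ x := fun h => hxM e heC (of_decide_eq_true heM) (h ▸ hye)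
    have hya : y ≠ a := fun h => ha e heC (of_decide_eq_true heM) (h ▸ hye)
    have hyC : y ∈ C.support.tail :=
      ((C.mem_support_iff).mp (C.mem_support_of_mem_edges heC hye)).resolve_left hya
    simp [hyx, hya, hyC]
  have hle := Finset.card_le_card hsub
  rw [hM.card_biUnion_toFinset hFM, hcardF,
    Finset.card_erase_of_mem (by simp [hxa, (C.mem_support_iff).mp hx |>.resolve_left hxa]),
    Finset.card_erase_of_mem (List.mem_toFinset.mpr (C.end_mem_tail_support hC.not_nil)),
    hC.card_toFinset_support_tail] at hle
  obtain ⟨k, hk⟩ := hodd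
  have := hC.three_le_length
  omega

end SimpleGraph.Walk

namespace IsPerfectFlower

variable {V : Type} [DecidableEq V] {G : SimpleGraph V} {M : Finset (Sym2 V)} {a b : V}
  {C : G.Walk a a} {P : G.Walk a b}

theorem exists_mem_path_edges (hF : IsPerfectFlower G M C P) {x : V} (hx : x ∈ P.support) :
    ∃ e ∈ P.edges, e ∈ M ∧ x ∈ e :=
  P.exists_mem_edges_of_alternating hF.nontrivial hF.alternating hF.firstEdge hF.lastEdge x hx

theorem start_not_mem_of_mem_cycle_edges (hM : IsMatching G M) (hF : IsPerfectFlower G M C P)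
    {e : Sym2 V} (heC : e ∈ C.edges) (heM : e ∈ M) : a ∉ e := by
  intro hae
  obtain ⟨f, hfP, hfM, haf⟩ := hF.exists_mem_path_edges P.start_mem_support
  obtain rfl := hM.eq_of_mem_of_mem heM hfM hae haf
  obtain ⟨y, hyC, hya, rfl⟩ := SimpleGraph.Walk.exists_mem_support_ne_of_mem_edges heC hae
  exact hya ((hF.meet y).mp ⟨hyC, P.snd_mem_support_of_mem_edges hfP⟩)

theorem exists_partner (hM : IsMatching G M) (hF : IsPerfectFlower G M C P) {x : V}
    (hx : x ∈ C.support ∨ x ∈ P.support) :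
    ∃ y, (y ∈ C.support ∨ y ∈ P.support) ∧ y ≠ x ∧ s(x, y) ∈ M := by
  by_cases hxP : x ∈ P.support
  · obtain ⟨e, he, heM, hxe⟩ := hF.exists_mem_path_edges hxP
    obtain ⟨y, hy, hyx, rfl⟩ := SimpleGraph.Walk.exists_mem_support_ne_of_mem_edges he hxe
    exact ⟨y, .inr hy, hyx, heM⟩
  · have hxa : x ≠ a := fun h => hxP (h ▸ P.start_mem_support)
    obtain ⟨e, he, heM, hxe⟩ := hF.cycle.exists_mem_edges_of_countP_eq hM hF.odd hF.blossom
      (fun _ => hF.start_not_mem_of_mem_cycle_edges hM) (hx.resolve_right hxP) hxa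
    obtain ⟨y, hy, hyx, rfl⟩ := SimpleGraph.Walk.exists_mem_support_ne_of_mem_edges he hxe
    exact ⟨y, .inl hy, hyx, heM⟩

theorem mem_of_mk_mem (hM : IsMatching G M) (hF : IsPerfectFlower G M C P) {x y : V}
    (hxy : s(x, y) ∈ M) (hx : x ∈ C.support ∨ x ∈ P.support) :
    y ∈ C.support ∨ y ∈ P.support := by
  obtain ⟨z, hz, -, hxz⟩ := hF.exists_partner hM hx
  rwa [hM.eq_of_mk_mem_of_mk_mem hxy hxz]

end IsPerfectFlower

theorem stmt8_general {V : Type} [DecidableEq V] (G : SimpleGraph V)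
    (M : Finset (Sym2 V)) (hM : IsPerfectMatching G M)
    {a b : V} (C : G.Walk a a) (P : G.Walk a b) (hF : IsPerfectFlower G M C P) :
    (∀ e ∈ M, ∀ u v : V, e = s(u, v) →
      ((u ∈ C.support ∨ u ∈ P.support) ↔ (v ∈ C.support ∨ v ∈ P.support))) ∧
    (∀ v : V, (v ∈ C.support ∨ v ∈ P.support) →
      ∃ u : V, (u ∈ C.support ∨ u ∈ P.support) ∧ u ≠ v ∧ s(v, u) ∈ M) := by
  refine ⟨?_, fun v hv => hF.exists_partner hM.1 hv⟩
  rintro e he u v rfl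
  exact ⟨hF.mem_of_mk_mem hM.1 he, hF.mem_of_mk_mem hM.1 (Sym2.eq_swap ▸ he)⟩

/-- Let `M` be a perfect matching of `G` and `(C, P)` an `M`-perfect
flower.  Then no edge of `M` has exactly one endpoint in `V(C) ∪ V(P)`; equivalently,
every vertex of `V(C) ∪ V(P)` is matched by `M` to another vertex of `V(C) ∪ V(P)`. -/
theorem stmt8 {V : Type} [Fintype V] [DecidableEq V] (G : SimpleGraph V)
    (M : Finset (Sym2 V)) (hM : IsPerfectMatching G M)
    {a b : V} (C : G.Walk a a) (P : G.Walk a b) (hF : IsPerfectFlower G M C P) :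
    (∀ e ∈ M, ∀ u v : V, e = s(u, v) →
      ((u ∈ C.support ∨ u ∈ P.support) ↔ (v ∈ C.support ∨ v ∈ P.support))) ∧
    (∀ v : V, (v ∈ C.support ∨ v ∈ P.support) →
      ∃ u : V, (u ∈ C.support ∨ u ∈ P.support) ∧ u ≠ v ∧ s(v, u) ∈ M) :=
  stmt8_general G M hM C P hF
end
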